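/- Under the straightening hypothesis, the leading exponent of a product of two basis monomials is the sum of their exponents: for all finitely supported functions m, n : I → ℕ, the product M(m)·M(n) is nonzero and |M(m)·M(n)| = m + n in O. (Proposition 3.3 of the paper.) -/

import Mathlib

/-!
Proposition 3.3: under the straightening hypothesis, for all finitely
supported exponent functions `m n : I →₀ ℕ`, the product of ordered
monomials `M(m) * M(n)` is nonzero and has leading exponent `m + n`.
-/

open scoped BigOperators

/-- The ordered monomial `∏ a_i ^ m i`, the product taken over the support of
`m` in strictly decreasing order of the index `i`. -/
noncomputable def ordMon {I : Type*} [LinearOrder I] {A : Type*} [Ring A]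
    (a : I → A) (m : I →₀ ℕ) : A :=
  ((m.support.sort (· ≤ ·)).reverse.map (fun i => a i ^ m i)).prod

/-- The total order on `O = (I →₀ ℕ)`: `m < n` iff at the largest index `j`
where `m` and `n` differ one has `m j < n j`. -/
def leadLT {I : Type*} [LinearOrder I] (m n : I →₀ ℕ) : Prop :=
  ∃ j, m j < n j ∧ ∀ i, j < i → m i = n i

/-- `μ` is the leading exponent `|x|` of `x`: the largest element of `O`
whose basis monomial occurs with nonzero coefficient in the expansion of `x`
with respect to the basis `B` of monomials. -/
def isLead {I K A : Type*} [LinearOrder I] [Field K] [Ring A] [Algebra K A]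
    (B : Module.Basis (I →₀ ℕ) K A) (x : A) (μ : I →₀ ℕ) : Prop :=
  B.repr x μ ≠ 0 ∧ ∀ ν, B.repr x ν ≠ 0 → ν = μ ∨ leadLT ν μ

/-!
Index the basis by `Colex (I →₀ ℕ)`, which is the order `O`: a well-order compatible with
addition. Argue by well-founded induction on `μ = m + n` and, inside, by induction on `m`.
Peel the least index `i` of `m` off the right, `M(m) = M(m') a_i`. Then `a_i M(n)` has leading
exponent `e_i + n`: it equals `M(e_i + n)` when no index of `n` exceeds `i`, and otherwise the
straightening relation moves `a_i` past the first factor `a_j` of `M(n)`, at the cost of terms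
strictly below `μ`. Finally, left multiplication by `M(m')` keeps a leading term leading,
because by induction it sends lower monomials to combinations of lower monomials.
-/

namespace Module.Basis

section Module

variable {ι K A : Type*} [PartialOrder ι] [Semiring K] [AddCommMonoid A] [Module K A]
  (b : Basis ι K A)

def SupportedBelow (x : A) (μ : ι) : Prop :=
  ∀ ν, b.repr x ν ≠ 0 → ν < μ

def HasLeadingIndex (x : A) (μ : ι) : Prop :=
  b.repr x μ ≠ 0 ∧ ∀ ν, b.repr x ν ≠ 0 → ν ≤ μ

variable {b}

theorem SupportedBelow.add {x y : A} {μ : ι} (hx : b.SupportedBelow x μ)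
    (hy : b.SupportedBelow y μ) : b.SupportedBelow (x + y) μ := by
  intro ν hν
  by_cases h : b.repr x ν = 0
  · exact hy ν (by simpa [h] using hν)
  · exact hx ν h

theorem SupportedBelow.smul {x : A} {μ : ι} (c : K) (hx : b.SupportedBelow x μ) :
    b.SupportedBelow (c • x) μ :=
  fun ν hν => hx ν fun h => hν (by simp [h])

theorem SupportedBelow.sum {α : Type*} {s : Finset α} {f : α → A} {μ : ι}
    (h : ∀ i ∈ s, b.SupportedBelow (f i) μ) : b.SupportedBelow (∑ i ∈ s, f i) μ := by
  classical
  induction s using Finset.induction_on with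
  | empty => simp [SupportedBelow]
  | insert i s hi ih =>
    rw [Finset.sum_insert hi]
    exact (h i (s.mem_insert_self i)).add (ih fun j hj => h j (Finset.mem_insert_of_mem hj))

theorem HasLeadingIndex.ne_zero {x : A} {μ : ι} (h : b.HasLeadingIndex x μ) : x ≠ 0 :=
  fun hx => h.1 (by simp [hx])

theorem HasLeadingIndex.supportedBelow_of_lt {x : A} {ν μ : ι} (h : b.HasLeadingIndex x ν)
    (hνμ : ν < μ) : b.SupportedBelow x μ :=
  fun σ hσ => (h.2 σ hσ).trans_lt hνμ

theorem hasLeadingIndex_basis [Nontrivial K] (μ : ι) : b.HasLeadingIndex (b μ) μ := by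
  refine ⟨by simp, fun ν hν => ?_⟩
  rw [repr_self, Finsupp.single_apply_ne_zero] at hν
  exact hν.1.le

theorem HasLeadingIndex.smul [NoZeroDivisors K] {x : A} {μ : ι} {c : K} (hc : c ≠ 0)
    (h : b.HasLeadingIndex x μ) : b.HasLeadingIndex (c • x) μ :=
  ⟨by simpa using mul_ne_zero hc h.1, fun ν hν => h.2 ν fun h0 => hν (by simp [h0])⟩

theorem HasLeadingIndex.add_supportedBelow {x y : A} {μ : ι} (hx : b.HasLeadingIndex x μ)
    (hy : b.SupportedBelow y μ) : b.HasLeadingIndex (x + y) μ := by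
  have hyμ : b.repr y μ = 0 := by_contra fun h => (hy μ h).false
  refine ⟨by simpa [hyμ] using hx.1, fun ν hν => ?_⟩
  by_cases h : b.repr x ν = 0
  · exact (hy ν (by simpa [h] using hν)).le
  · exact hx.2 ν h

end Module

section Algebra

variable {ι K A : Type*} [PartialOrder ι] [CommRing K] [Ring A] [Algebra K A]
  {b : Basis ι K A}

theorem SupportedBelow.mul_left {x : A} {μ : ι} (w : A)
    (h : ∀ ν, b.repr x ν ≠ 0 → b.SupportedBelow (w * b ν) μ) :
    b.SupportedBelow (w * x) μ := by
  rw [← b.linearCombination_repr x, Finsupp.linearCombination_apply, Finsupp.sum,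
    Finset.mul_sum]
  refine SupportedBelow.sum fun ν hν => ?_
  rw [mul_smul_comm]
  exact (h ν (Finsupp.mem_support_iff.1 hν)).smul _

theorem HasLeadingIndex.supportedBelow_sub {x : A} {μ : ι} (h : b.HasLeadingIndex x μ) :
    b.SupportedBelow (x - b.repr x μ • b μ) μ := by
  intro ν hν
  have hνμ : ν ≠ μ := by rintro rfl; simp at hν
  rw [map_sub, map_smul, repr_self, Finsupp.sub_apply, Finsupp.smul_apply,
    Finsupp.single_eq_of_ne hνμ, smul_zero, sub_zero] at hν
  exact (h.2 ν hν).lt_of_ne hνμ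

theorem HasLeadingIndex.mul_left [NoZeroDivisors K] {x w : A} {μ ρ : ι}
    (hx : b.HasLeadingIndex x μ) (htop : b.HasLeadingIndex (w * b μ) ρ)
    (hlow : ∀ ν < μ, b.SupportedBelow (w * b ν) ρ) : b.HasLeadingIndex (w * x) ρ := by
  have hsplit : w * x = b.repr x μ • (w * b μ) + w * (x - b.repr x μ • b μ) := by
    rw [mul_sub, mul_smul_comm, add_sub_cancel]
  rw [hsplit]
  exact (htop.smul hx.1).add_supportedBelow
    (SupportedBelow.mul_left w fun ν hν => hlow ν (hx.supportedBelow_sub ν hν))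

end Algebra

end Module.Basis

theorem Finset.sort_union_of_forall_lt {I : Type*} [LinearOrder I] {s t : Finset I}
    (h : ∀ i ∈ s, ∀ j ∈ t, i < j) : (s ∪ t).sort (· ≤ ·) = s.sort (· ≤ ·) ++ t.sort (· ≤ ·) := by
  refine List.Perm.eq_of_pairwise' (Finset.pairwise_sort _ _) ?_ ?_
  · exact List.pairwise_append.2 ⟨Finset.pairwise_sort _ _, Finset.pairwise_sort _ _,
      fun i hi j hj => (h i ((Finset.mem_sort _).1 hi) j ((Finset.mem_sort _).1 hj)).le⟩
  · have hdisj : ∀ i ∈ s, i ∉ t := fun i hs ht => (h i hs i ht).false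
    rw [List.perm_ext_iff_of_nodup (Finset.sort_nodup _ _)
      (List.nodup_append.2 ⟨Finset.sort_nodup _ _, Finset.sort_nodup _ _, fun i hi j hj => ?_⟩)]
    · simp
    · rintro rfl
      exact hdisj i ((Finset.mem_sort _).1 hi) ((Finset.mem_sort _).1 hj)

section OrderedMonomial

variable {I A : Type*} [LinearOrder I] [Ring A] (a : I → A)

open Finsupp

theorem ordMon_zero : ordMon a 0 = 1 := by
  simp [ordMon]

theorem ordMon_add_of_forall_lt {m n : I →₀ ℕ} (h : ∀ i ∈ m.support, ∀ j ∈ n.support, i < j) :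
    ordMon a (m + n) = ordMon a n * ordMon a m := by
  classical
  have hdisj : Disjoint m.support n.support :=
    Finset.disjoint_left.2 fun i hm hn => (h i hm i hn).false
  have hm : ∀ i ∈ m.support, (m + n) i = m i := fun i hi => by
    simp [notMem_support_iff.1 (Finset.disjoint_left.1 hdisj hi)]
  have hn : ∀ i ∈ n.support, (m + n) i = n i := fun i hi => by
    simp [notMem_support_iff.1 (Finset.disjoint_right.1 hdisj hi)]
  unfold ordMon
  rw [support_add_eq hdisj, Finset.sort_union_of_forall_lt h, List.reverse_append,
    List.map_append, List.prod_append]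
  congr 2 <;> refine List.map_congr_left fun i hi => ?_ <;>
    rw [List.mem_reverse, Finset.mem_sort] at hi
  · rw [hn i hi]
  · rw [hm i hi]

theorem ordMon_single (i : I) (c : ℕ) : ordMon a (single i c) = a i ^ c := by
  rcases eq_or_ne c 0 with rfl | hc
  · simp [ordMon_zero]
  · simp [ordMon, hc]

theorem ordMon_single_one (i : I) : ordMon a (single i 1) = a i := by
  simp [ordMon_single]

theorem ordMon_erase_add_single {n : I →₀ ℕ} {i : I} (h : ∀ k ∈ n.support, k ≤ i) (c : ℕ) :
    ordMon a (n.erase i + single i c) = a i ^ c * ordMon a (n.erase i) := by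
  rw [ordMon_add_of_forall_lt a, ordMon_single]
  intro k hk l hl
  rw [support_erase, Finset.mem_erase] at hk
  rw [Finset.mem_singleton.1 (support_single_subset hl)]
  exact (h k hk.2).lt_of_ne hk.1

theorem mul_ordMon_of_forall_le {n : I →₀ ℕ} {i : I} (h : ∀ k ∈ n.support, k ≤ i) :
    a i * ordMon a n = ordMon a (single i 1 + n) := by
  have hsplit : single i 1 + n = n.erase i + single i (n i + 1) := by
    ext k
    rcases eq_or_ne k i with rfl | hk <;> simp [*, add_comm]
  rw [hsplit, ordMon_erase_add_single a h, pow_succ', mul_assoc,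
    ← ordMon_erase_add_single a h, n.erase_add_single]

theorem ordMon_single_add_erase {n : I →₀ ℕ} {i : I} (h : ∀ k ∈ n.support, i ≤ k) (c : ℕ) :
    ordMon a (single i c + n.erase i) = ordMon a (n.erase i) * a i ^ c := by
  rw [ordMon_add_of_forall_lt a, ordMon_single]
  intro l hl k hk
  rw [support_erase, Finset.mem_erase] at hk
  rw [Finset.mem_singleton.1 (support_single_subset hl)]
  exact (h k hk.2).lt_of_ne' hk.1

theorem ordMon_mul_of_forall_ge {n : I →₀ ℕ} {i : I} (h : ∀ k ∈ n.support, i ≤ k) :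
    ordMon a n * a i = ordMon a (n + single i 1) := by
  have hsplit : n + single i 1 = single i (n i + 1) + n.erase i := by
    ext k
    rcases eq_or_ne k i with rfl | hk <;> simp [*]
  rw [hsplit, ordMon_single_add_erase a h, pow_succ, ← mul_assoc,
    ← ordMon_single_add_erase a h, n.single_add_erase]

end OrderedMonomial

theorem Finsupp.exists_add_single_eq {ι : Type*} {n : ι →₀ ℕ} {j : ι} (hj : j ∈ n.support) :
    ∃ n', n' + single j 1 = n ∧ n' < n := by
  have hle : single j 1 ≤ n := single_le_iff.2 (Nat.one_le_iff_ne_zero.2 (mem_support_iff.1 hj))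
  refine ⟨n - single j 1, tsub_add_cancel_of_le hle, ?_⟩
  conv_rhs => rw [← tsub_add_cancel_of_le hle]
  exact lt_add_of_pos_right _ (by simp [pos_iff_ne_zero])

section Colex

variable {I : Type*} [LinearOrder I]

theorem leadLT_iff_toColex_lt {m n : I →₀ ℕ} : leadLT m n ↔ toColex m < toColex n := by
  rw [Finsupp.Colex.lt_iff]
  exact exists_congr fun j => and_comm

theorem toColex_le_toColex_add (m n : I →₀ ℕ) : toColex n ≤ toColex (m + n) := by
  rw [toColex_add]
  exact le_add_of_nonneg_left (Finsupp.toColex_monotone zero_le)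

theorem toColex_lt_toColex_add {m : I →₀ ℕ} (n : I →₀ ℕ) (hm : m ≠ 0) :
    toColex n < toColex (m + n) :=
  (toColex_le_toColex_add m n).lt_of_ne fun h => hm (by simpa using h)

theorem isLead_iff_hasLeadingIndex_reindex {K A : Type*} [Field K] [Ring A] [Algebra K A]
    {B : Module.Basis (I →₀ ℕ) K A} {x : A} {μ : I →₀ ℕ} :
    isLead B x μ ↔ (B.reindex toColex).HasLeadingIndex x (toColex μ) := by
  simp only [isLead, Module.Basis.HasLeadingIndex, Module.Basis.repr_reindex_apply,
    leadLT_iff_toColex_lt, le_iff_eq_or_lt, Equiv.symm_apply_apply]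
  rw [toColex.forall_congr_left]
  simp only [Equiv.apply_symm_apply, Equiv.symm_apply_eq]

end Colex

section Straightening

variable {I K A : Type*} [LinearOrder I] [Field K] [Ring A] [Algebra K A]

open Module Finsupp

def Straightens (K : Type*) [Field K] [Algebra K A] (a : I → A) : Prop :=
  ∀ i j : I, i < j → ∃ ξ : K, ξ ≠ 0 ∧ ∃ c : (I →₀ ℕ) →₀ K,
    a i * a j = ξ • (a j * a i) + c.sum (fun v ξv => ξv • ordMon a v) ∧
    ∀ v, c v ≠ 0 → leadLT v (single i 1 + single j 1)

theorem mul_mul_eq_of_straighten {a : I → A} {i j : I} {ξ : K} {c : (I →₀ ℕ) →₀ K}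
    (h : a i * a j = ξ • (a j * a i) + c.sum (fun v ξv => ξv • ordMon a v)) (z : A) :
    a i * (a j * z) = ξ • (a j * (a i * z)) + ∑ v ∈ c.support, c v • (ordMon a v * z) := by
  rw [← mul_assoc, h, add_mul, smul_mul_assoc, mul_assoc, Finsupp.sum, Finset.sum_mul]
  simp only [smul_mul_assoc]

variable {a : I → A} {b : Basis (Colex (I →₀ ℕ)) K A}

def MulLeadsBelow (b : Basis (Colex (I →₀ ℕ)) K A) (a : I → A) (μ : Colex (I →₀ ℕ)) : Prop :=
  ∀ m n : I →₀ ℕ, toColex (m + n) < μ →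
    b.HasLeadingIndex (ordMon a m * ordMon a n) (toColex (m + n))

namespace MulLeadsBelow

variable {μ : Colex (I →₀ ℕ)}

theorem mono {ν : Colex (I →₀ ℕ)} (ih : MulLeadsBelow b a μ) (h : ν ≤ μ) :
    MulLeadsBelow b a ν :=
  fun m n hmn => ih m n (hmn.trans_le h)

theorem supportedBelow (ih : MulLeadsBelow b a μ) {m n : I →₀ ℕ} (h : toColex (m + n) < μ) :
    b.SupportedBelow (ordMon a m * ordMon a n) μ :=
  (ih m n h).supportedBelow_of_lt h

theorem hasLeadingIndex_ordMon_mul (hb : ∀ m, b (toColex m) = ordMon a m) {m n : I →₀ ℕ}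
    {x : A} (ih : MulLeadsBelow b a (toColex (m + n)))
    (htop : b.HasLeadingIndex (ordMon a m * ordMon a n) (toColex (m + n)))
    (hx : b.HasLeadingIndex x (toColex n)) :
    b.HasLeadingIndex (ordMon a m * x) (toColex (m + n)) := by
  refine hx.mul_left (by rwa [hb]) fun ν hν => ?_
  rw [← toColex_ofColex ν, hb]
  refine ih.supportedBelow ?_
  rw [toColex_add, toColex_add, toColex_ofColex]
  exact add_lt_add_right hν _

theorem hasLeadingIndex_mul_mul_ordMon (hb : ∀ m, b (toColex m) = ordMon a m)
    (hstr : Straightens K a) {i j : I} (hij : i < j) {n : I →₀ ℕ}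
    (hn : ∀ k ∈ n.support, k ≤ j) (ih : MulLeadsBelow b a (toColex (single i 1 + single j 1 + n))) :
    b.HasLeadingIndex (a i * (a j * ordMon a n)) (toColex (single i 1 + single j 1 + n)) := by
  obtain ⟨ξ, hξ, c, hc, hcv⟩ := hstr i j hij
  have hμ : single i 1 + single j 1 + n = single j 1 + (single i 1 + n) := by abel
  have hlead : b.HasLeadingIndex (a i * ordMon a n) (toColex (single i 1 + n)) := by
    rw [← ordMon_single_one a i]
    refine ih _ _ ?_
    rw [hμ]
    exact toColex_lt_toColex_add _ (by simp)
  have htop : b.HasLeadingIndex (a j * (a i * ordMon a n))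
      (toColex (single i 1 + single j 1 + n)) := by
    have hin : ∀ k ∈ (single i 1 + n).support, k ≤ j := fun k hk =>
      (Finset.mem_union.1 (support_add hk)).elim
        (fun hk => (Finset.mem_singleton.1 (support_single_subset hk)).symm ▸ hij.le) (hn k)
    rw [hμ] at ih ⊢
    rw [← ordMon_single_one a j]
    refine ih.hasLeadingIndex_ordMon_mul hb ?_ hlead
    rw [ordMon_single_one, mul_ordMon_of_forall_le a hin, ← hb]
    exact b.hasLeadingIndex_basis _
  have hrest : b.SupportedBelow (∑ v ∈ c.support, c v • (ordMon a v * ordMon a n))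
      (toColex (single i 1 + single j 1 + n)) := by
    refine Basis.SupportedBelow.sum fun v hv => (ih.supportedBelow ?_).smul _
    rw [toColex_add, toColex_add]
    exact add_lt_add_left (leadLT_iff_toColex_lt.1 (hcv v (mem_support_iff.1 hv))) _
  rw [mul_mul_eq_of_straighten hc]
  exact (htop.smul hξ).add_supportedBelow hrest

theorem hasLeadingIndex_mul_ordMon (hb : ∀ m, b (toColex m) = ordMon a m)
    (hstr : Straightens K a) {i : I} {n : I →₀ ℕ}
    (ih : MulLeadsBelow b a (toColex (single i 1 + n))) :
    b.HasLeadingIndex (a i * ordMon a n) (toColex (single i 1 + n)) := by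
  by_cases hn : ∀ k ∈ n.support, k ≤ i
  · rw [mul_ordMon_of_forall_le a hn, ← hb]
    exact b.hasLeadingIndex_basis _
  push Not at hn
  obtain ⟨k, hk, hik⟩ := hn
  obtain ⟨j, hj, hnj⟩ : ∃ j ∈ n.support, ∀ k ∈ n.support, k ≤ j :=
    ⟨_, n.support.max'_mem ⟨k, hk⟩, n.support.le_max'⟩
  obtain ⟨n', rfl, hn'⟩ := exists_add_single_eq hj
  have hn'j : ∀ k ∈ n'.support, k ≤ j := fun k hk => hnj k (support_mono hn'.le hk)
  rw [add_comm n', ← add_assoc] at ih ⊢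
  rw [← mul_ordMon_of_forall_le a hn'j]
  exact ih.hasLeadingIndex_mul_mul_ordMon hb hstr (hik.trans_le (hnj k hk)) hn'j

theorem hasLeadingIndex_ordMon_mul_ordMon (hb : ∀ m, b (toColex m) = ordMon a m)
    (hstr : Straightens K a) {m n : I →₀ ℕ} (ih : MulLeadsBelow b a (toColex (m + n))) :
    b.HasLeadingIndex (ordMon a m * ordMon a n) (toColex (m + n)) := by
  induction m using WellFoundedLT.induction generalizing n with
  | ind m ihm =>
  rcases eq_or_ne m 0 with rfl | hm
  · rw [ordMon_zero, one_mul, zero_add, ← hb]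
    exact b.hasLeadingIndex_basis _
  obtain ⟨i, hi, hmi⟩ : ∃ i ∈ m.support, ∀ k ∈ m.support, i ≤ k :=
    ⟨_, m.support.min'_mem (support_nonempty_iff.2 hm), m.support.min'_le⟩
  obtain ⟨m', rfl, hm'⟩ := exists_add_single_eq hi
  have hm'i : ∀ k ∈ m'.support, i ≤ k := fun k hk => hmi k (support_mono hm'.le hk)
  rw [← ordMon_mul_of_forall_ge a hm'i, mul_assoc, add_assoc]
  rw [add_assoc] at ih
  exact ih.hasLeadingIndex_ordMon_mul hb (ihm m' hm' ih)
    ((ih.mono (toColex_le_toColex_add _ _)).hasLeadingIndex_mul_ordMon hb hstr)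

end MulLeadsBelow

theorem mulLeadsBelow [WellFoundedLT I] (hb : ∀ m, b (toColex m) = ordMon a m)
    (hstr : Straightens K a) (μ : Colex (I →₀ ℕ)) : MulLeadsBelow b a μ := by
  induction μ using WellFoundedLT.induction with
  | ind μ ih => exact fun m n h => (ih _ h).hasLeadingIndex_ordMon_mul_ordMon hb hstr

end Straightening

theorem leading_exponent_of_product_is_sum
    {I K A : Type*} [LinearOrder I] [Field K] [Ring A] [Algebra K A]
    -- `<` on `I` is well founded (no infinite strictly decreasing chains)
    (hwf : WellFounded ((· < ·) : I → I → Prop))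
    (a : I → A)
    -- the ordered monomials form a `K`-basis of `A`
    (B : Module.Basis (I →₀ ℕ) K A) (hB : ∀ m : I →₀ ℕ, B m = ordMon a m)
    -- straightening hypothesis (*)
    (hstr : ∀ i j : I, i < j → ∃ ξ : K, ξ ≠ 0 ∧ ∃ c : (I →₀ ℕ) →₀ K,
      a i * a j = ξ • (a j * a i) + c.sum (fun v ξv => ξv • ordMon a v) ∧
      ∀ v, c v ≠ 0 → leadLT v (Finsupp.single i 1 + Finsupp.single j 1)) :
    ∀ m n : I →₀ ℕ, ordMon a m * ordMon a n ≠ 0 ∧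
      isLead B (ordMon a m * ordMon a n) (m + n) := by
  have : WellFoundedLT I := ⟨hwf⟩
  have hb : ∀ m, B.reindex toColex (toColex m) = ordMon a m := by simp [hB]
  intro m n
  have h : (B.reindex toColex).HasLeadingIndex (ordMon a m * ordMon a n) (toColex (m + n)) :=
    (mulLeadsBelow hb hstr _).hasLeadingIndex_ordMon_mul_ordMon hb hstr
  exact ⟨h.ne_zero, isLead_iff_hasLeadingIndex_reindex.2 h⟩
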